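/- Let p be a prime and G a finite metacyclic p-group. Then there exist elements a, b ∈ G generating G such that ⟨a⟩ is normal in G, [⟨a⟩, N_G(⟨a⟩)] = ⟨a⟩ ∩ G', [⟨b⟩, N_G(⟨b⟩)] = ⟨b⟩ ∩ G', and the images A, B of ⟨a⟩, ⟨b⟩ in the abelianization G/G' satisfy A ∩ B = 1 and A·B = G/G'. (That is, the family formed by ⟨a⟩ and the conjugates of ⟨b⟩ in G is a generating, regular and independent family of cyclic subgroups.) -/

import Mathlib

/-!
Write `G = ⟨k⟩⟨t⟩` with `⟨k⟩` normal and cyclic. Whenever `G = ⟨a⟩⟨b⟩` with `⟨a⟩` normal,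
`m ↦ ⁅m, b⁆` is a homomorphism on the abelian group `⟨a⟩` whose image is normal with abelian
quotient, so `G' = {⁅m, b⁆ | m ∈ ⟨a⟩} ≤ ⟨a⟩`. Both regularity identities follow from this; for
`⟨b⟩` the point is that `⁅m, b⁆ ∈ ⟨b⟩` says `m b m⁻¹ ∈ ⟨b⟩`, so `m` normalizes `⟨b⟩`.

Independence of the images in `G/G'` amounts to `|ā| · |b̄| ≤ |G/G'| = d q`, where `d = |k̄|`
and `q = |G : ⟨k⟩|`. Write `t^q = k^j`. If `gcd(q, d) ∣ j`, then `k̄^j` is a power `k̄^{q c}`,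
so the image of `t k^{-c}` has order dividing `q` and `(k, t k^{-c})` works. Otherwise, all these
numbers being powers of `p`, `gcd(j, |k|)` divides `d`, whence `G' ≤ ⟨k^d⟩ ≤ ⟨k^j⟩ ≤ ⟨t⟩` and
`⟨t⟩` is normal; moreover `g = gcd(j, d)` divides `q` and `|t̄|` divides `q d / g`, and writing
`k̄^g = k̄^{j s}`, the image of `k t^{-s q / g}` has order dividing `g`, so `(t, k t^{-s q / g})`
works.
-/

open Subgroup
open scoped commutatorElement

section

variable {G : Type*} [Group G]

theorem commutator_normalizer_le (H : Subgroup G) : ⁅H, normalizer (H : Set G)⁆ ≤ H :=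
  le_normalizer_iff_commutator_le_left.mp le_rfl

theorem mem_normalizer_zpowers_of_conj_mem [Finite G] {g b : G} (h : g * b * g⁻¹ ∈ zpowers b) :
    g ∈ normalizer (zpowers b : Set G) :=
  mem_normalizer_fintype fun _ ⟨i, hi⟩ ↦ by
    rw [← hi, SetLike.mem_coe, ← conj_zpow]
    exact zpow_mem h i

theorem zpowers_sup_zpowers_mul_zpow (a b : G) (n : ℤ) :
    zpowers a ⊔ zpowers (b * a ^ n) = zpowers a ⊔ zpowers b := by
  refine le_antisymm (sup_le le_sup_left ?_) (sup_le le_sup_left ?_) <;> rw [zpowers_le]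
  · exact mul_mem (mem_sup_right (mem_zpowers b)) (mem_sup_left (zpow_mem_zpowers a n))
  · simpa using mul_mem (mem_sup_right (mem_zpowers (b * a ^ n)))
      (mem_sup_left (zpow_mem_zpowers a (-n)))

theorem closure_pair_eq_top {a b : G} (h : zpowers a ⊔ zpowers b = ⊤) :
    closure ({a, b} : Set G) = ⊤ := by
  rw [Set.insert_eq, Subgroup.closure_union, ← zpowers_eq_closure, ← zpowers_eq_closure, h]

theorem exists_sup_zpowers_eq_top_of_isCyclic_quotient (N : Subgroup G) [N.Normal]
    [IsCyclic (G ⧸ N)] : ∃ t : G, N ⊔ zpowers t = ⊤ := by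
  obtain ⟨x, hx⟩ := isCyclic_iff_exists_zpowers_eq_top.mp ‹_›
  obtain ⟨t, rfl⟩ := QuotientGroup.mk'_surjective N x
  refine ⟨t, ?_⟩
  rw [sup_comm, ← QuotientGroup.ker_mk' N, ← comap_map_eq, MonoidHom.map_zpowers, hx, comap_top]

theorem inf_eq_bot_of_sup_eq_top_of_card_mul_le [Finite G] {H N : Subgroup G} [N.Normal]
    (hsup : H ⊔ N = ⊤) (hcard : Nat.card H * Nat.card N ≤ Nat.card G) : H ⊓ N = ⊥ := by
  have hsurj : Function.Surjective fun x : H × N ↦ (x.1 : G) * x.2 := fun g ↦ by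
    have hg : g ∈ (↑(H ⊔ N) : Set G) := hsup ▸ mem_top g
    rw [mul_normal] at hg
    obtain ⟨h, hh, n, hn, rfl⟩ := hg
    exact ⟨(⟨h, hh⟩, ⟨n, hn⟩), rfl⟩
  have hcompl : IsComplement' H N := (Nat.bijective_iff_surjective_and_card _).mpr
    ⟨hsurj, le_antisymm (Nat.card_prod H N ▸ hcard) (Nat.card_le_card_of_surjective _ hsurj)⟩
  exact disjoint_iff.mp hcompl.disjoint

theorem map_zpowers_inf_map_zpowers_eq_bot {Q : Type*} [Group Q] [Finite Q] {f : G →* Q}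
    (hf : Function.Surjective f) {a b : G} (hn : (zpowers a).Normal)
    (hsup : zpowers a ⊔ zpowers b = ⊤) (hcard : orderOf (f a) * orderOf (f b) ≤ Nat.card Q) :
    (zpowers a).map f ⊓ (zpowers b).map f = ⊥ := by
  have := hn.map f hf
  rw [inf_comm]
  refine inf_eq_bot_of_sup_eq_top_of_card_mul_le ?_ ?_
  · rw [← Subgroup.map_sup, sup_comm, hsup, map_top_of_surjective f hf]
  · rwa [MonoidHom.map_zpowers, MonoidHom.map_zpowers, Nat.card_zpowers, Nat.card_zpowers,
      mul_comm]

section NormalAbelian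

variable (A : Subgroup G) [A.Normal] (b : G)

theorem commutatorElement_mem_of_left_mem {m : G} (hm : m ∈ A) (g : G) : ⁅m, g⁆ ∈ A :=
  commutator_le_left A ⊤ (commutator_mem_commutator hm (mem_top g))

def commutatorRightHom [IsMulCommutative A] : A →* G where
  toFun m := ⁅(m : G), b⁆
  map_one' := by simp
  map_mul' m₁ m₂ := by
    have hu : b * (m₁ : G)⁻¹ * b⁻¹ ∈ A := Normal.conj_mem ‹_› _ (inv_mem m₁.2) b
    have hv : ⁅(m₂ : G), b⁆ ∈ A := commutatorElement_mem_of_left_mem A m₂.2 b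
    calc ⁅((m₁ * m₂ : A) : G), b⁆ = m₁ * (⁅(m₂ : G), b⁆ * (b * (m₁ : G)⁻¹ * b⁻¹)) := by
          simp only [coe_mul, commutatorElement_def]; group
      _ = ⁅(m₁ : G), b⁆ * ⁅(m₂ : G), b⁆ := by
          rw [setLike_mul_comm hv hu, commutatorElement_def]; group

@[simp]
theorem commutatorRightHom_apply [IsMulCommutative A] (m : A) :
    commutatorRightHom A b m = ⁅(m : G), b⁆ :=
  rfl

variable {A b}

theorem exists_mem_mul_zpow_eq (hsup : A ⊔ zpowers b = ⊤) (g : G) :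
    ∃ m ∈ A, ∃ i : ℤ, m * b ^ i = g := by
  have hg : g ∈ (↑(A ⊔ zpowers b) : Set G) := hsup ▸ mem_top g
  rw [normal_mul] at hg
  obtain ⟨m, hm, _, ⟨i, rfl⟩, h⟩ := hg
  exact ⟨m, hm, i, h⟩

theorem normal_range_commutatorRightHom [IsMulCommutative A] (hsup : A ⊔ zpowers b = ⊤) :
    (commutatorRightHom A b).range.Normal := by
  set S := (commutatorRightHom A b).range
  have hSA : S ≤ A := by rintro _ ⟨m, rfl⟩; exact commutatorElement_mem_of_left_mem A m.2 b
  have hbS : b ∈ normalizer (S : Set G) := by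
    refine mem_normalizer_iff.mpr fun h ↦ ⟨?_, ?_⟩
    · rintro ⟨m, rfl⟩
      refine ⟨⟨b * m * b⁻¹, Normal.conj_mem ‹_› _ m.2 b⟩, ?_⟩
      simp only [commutatorRightHom_apply, commutatorElement_def]
      group
    · rintro ⟨m, hm⟩
      refine ⟨⟨b⁻¹ * m * b, by simpa using Normal.conj_mem ‹_› _ m.2 b⁻¹⟩, ?_⟩
      rw [commutatorRightHom_apply] at hm
      rw [commutatorRightHom_apply, show h = b⁻¹ * ⁅(m : G), b⁆ * b by rw [hm]; group,
        commutatorElement_def]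
      group
  rw [← normalizer_eq_top_iff, eq_top_iff, ← hsup, sup_le_iff, zpowers_le]
  exact ⟨fun m hm ↦ centralizer_le_normalizer _ fun x hx ↦ setLike_mul_comm (hSA hx) hm, hbS⟩

theorem commutator_le_range_commutatorRightHom [IsMulCommutative A] (hsup : A ⊔ zpowers b = ⊤) :
    commutator G ≤ (commutatorRightHom A b).range := by
  set S := (commutatorRightHom A b).range
  have := normal_range_commutatorRightHom hsup
  have hb : ∀ m ∈ A, Commute (m : G ⧸ S) b := fun m hm ↦ by
    rw [← commutatorElement_eq_one_iff_commute]
    exact (QuotientGroup.eq_one_iff ⁅m, b⁆).mpr ⟨⟨m, hm⟩, rfl⟩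
  rw [← Normal.quotient_commutative_iff_commutator_le]
  refine isMulCommutative_iff.mpr fun x y ↦ ?_
  obtain ⟨g₁, rfl⟩ := QuotientGroup.mk_surjective x
  obtain ⟨g₂, rfl⟩ := QuotientGroup.mk_surjective y
  obtain ⟨m₁, hm₁, i₁, rfl⟩ := exists_mem_mul_zpow_eq hsup g₁
  obtain ⟨m₂, hm₂, i₂, rfl⟩ := exists_mem_mul_zpow_eq hsup g₂
  have hm : Commute (m₁ : G ⧸ S) m₂ := congrArg _ (setLike_mul_comm hm₁ hm₂)
  simp only [QuotientGroup.mk_mul, QuotientGroup.mk_zpow]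
  exact ((hm.mul_right ((hb m₁ hm₁).zpow_right i₂)).mul_left
    (((hb m₂ hm₂).zpow_right i₁).symm.mul_right (Commute.zpow_zpow_self _ i₁ i₂))).eq

theorem commutator_normalizer_eq_inf_commutator_of_normal [IsMulCommutative A]
    (hsup : A ⊔ zpowers b = ⊤) : ⁅A, normalizer (A : Set G)⁆ = A ⊓ commutator G := by
  rw [normalizer_eq_top_iff.mpr ‹_›,
    inf_eq_right.mpr (Normal.commutator_le_of_self_sup_commutative_eq_top hsup inferInstance)]
  refine le_antisymm (commutator_mono le_top le_rfl)
    ((commutator_le_range_commutatorRightHom hsup).trans ?_)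
  rintro _ ⟨m, rfl⟩
  exact commutator_mem_commutator m.2 (mem_top b)

theorem commutator_zpowers_normalizer_eq_inf_commutator [Finite G] [IsMulCommutative A]
    (hsup : A ⊔ zpowers b = ⊤) :
    ⁅zpowers b, normalizer (zpowers b : Set G)⁆ = zpowers b ⊓ commutator G := by
  refine le_antisymm (le_inf (commutator_normalizer_le _) (commutator_mono le_top le_top)) ?_
  rintro _ ⟨hb, hc⟩
  obtain ⟨m, rfl⟩ := commutator_le_range_commutatorRightHom hsup hc
  have hm : (m : G) ∈ normalizer (zpowers b : Set G) := by
    refine mem_normalizer_zpowers_of_conj_mem ?_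
    simpa [commutatorElement_def] using mul_mem hb (mem_zpowers b)
  rw [commutator_comm]
  exact commutator_mem_commutator hm (mem_zpowers b)

end NormalAbelian

theorem Nat.dvd_or_dvd_of_dvd_prime_pow {p n a b : ℕ} (hp : p.Prime) (ha : a ∣ p ^ n)
    (hb : b ∣ p ^ n) : a ∣ b ∨ b ∣ a := by
  obtain ⟨i, -, rfl⟩ := (Nat.dvd_prime_pow hp).1 ha
  obtain ⟨j, -, rfl⟩ := (Nat.dvd_prime_pow hp).1 hb
  exact (le_total i j).imp (pow_dvd_pow p) (pow_dvd_pow p)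

theorem pow_mem_zpowers_pow_of_gcd_dvd {g : G} {i j : ℕ} (h : j.gcd (orderOf g) ∣ i) :
    g ^ i ∈ zpowers (g ^ j) := by
  obtain ⟨e, rfl⟩ := h
  have hgcd : g ^ j.gcd (orderOf g) = (g ^ j) ^ j.gcdA (orderOf g) := by
    rw [← zpow_natCast, Nat.gcd_eq_gcd_ab, zpow_add, zpow_mul, zpow_mul,
      zpow_natCast g (orderOf g), pow_orderOf_eq_one, one_zpow, mul_one, zpow_natCast]
  rw [pow_mul, hgcd]
  exact pow_mem (zpow_mem_zpowers _ _) e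

section Abelianization

open Abelianization

variable {k t : G}

theorem card_abelianization_eq_orderOf_mul_index (h : commutator G ≤ zpowers k) :
    Nat.card (Abelianization G) = orderOf (of k) * (zpowers k).index := by
  rw [← (zpowers k).index_map_eq (QuotientGroup.mk'_surjective (commutator G))
      (by rwa [QuotientGroup.ker_mk']), ← Nat.card_zpowers, ← MonoidHom.map_zpowers]
  exact ((zpowers k).map (QuotientGroup.mk' (commutator G))).card_mul_index.symm

theorem commutator_le_zpowers_pow_orderOf_of (h : commutator G ≤ zpowers k) :
    commutator G ≤ zpowers (k ^ orderOf (of k)) := by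
  intro δ hδ
  obtain ⟨i, rfl⟩ := mem_zpowers_iff.mp (h hδ)
  have : of k ^ i = 1 := by rw [← map_zpow]; exact (ker_of G).ge hδ
  obtain ⟨e, rfl⟩ := orderOf_dvd_iff_zpow_eq_one.mpr this
  exact mem_zpowers_iff.mpr ⟨e, by rw [zpow_mul, zpow_natCast]⟩

theorem exists_zpowers_sup_eq_top_and_orderOf_dvd_index (hsup : zpowers k ⊔ zpowers t = ⊤)
    {j : ℕ} (hj : k ^ j = t ^ (zpowers k).index)
    (h : (zpowers k).index.gcd (orderOf (of k)) ∣ j) :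
    ∃ b, zpowers k ⊔ zpowers b = ⊤ ∧ orderOf (of b) ∣ (zpowers k).index := by
  obtain ⟨c, hc⟩ := mem_zpowers_iff.mp (pow_mem_zpowers_pow_of_gcd_dvd h)
  refine ⟨t * k ^ (-c), by rw [zpowers_sup_zpowers_mul_zpow, hsup], orderOf_dvd_of_pow_eq_one ?_⟩
  have htq : of t ^ (zpowers k).index = (of k ^ (zpowers k).index) ^ c := by
    rw [← map_pow, ← hj, map_pow, hc]
  rw [map_mul, map_zpow, mul_pow, htq]
  group

theorem exists_zpowers_sup_eq_top_and_orderOf_mul_orderOf_le [Finite G]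
    (hsup : zpowers k ⊔ zpowers t = ⊤) {j : ℕ} (hj : k ^ j = t ^ (zpowers k).index)
    (h : j.gcd (orderOf (of k)) ∣ (zpowers k).index) :
    ∃ b, zpowers t ⊔ zpowers b = ⊤ ∧
      orderOf (of t) * orderOf (of b) ≤ orderOf (of k) * (zpowers k).index := by
  set q := (zpowers k).index
  set d := orderOf (of k)
  set g := j.gcd d
  obtain ⟨s, hs⟩ := mem_zpowers_iff.mp (pow_mem_zpowers_pow_of_gcd_dvd (dvd_refl g))
  obtain ⟨r, hr⟩ := h
  obtain ⟨j', hj'⟩ := Nat.gcd_dvd_left j d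
  obtain ⟨e, he⟩ := Nat.gcd_dvd_right j d
  have htq : of t ^ q = of k ^ j := by rw [← map_pow, ← hj, map_pow]
  have ht : orderOf (of t) ∣ q * e := by
    refine orderOf_dvd_of_pow_eq_one ?_
    rw [pow_mul, htq, ← pow_mul, hj', mul_assoc, mul_comm j', ← mul_assoc, ← he, pow_mul,
      pow_orderOf_eq_one, one_pow]
  have hb : orderOf (of (k * t ^ (-(r * s : ℤ)))) ∣ g := by
    refine orderOf_dvd_of_pow_eq_one ?_
    have htrs : of t ^ ((r : ℤ) * s * g) = (of k ^ j) ^ s := by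
      rw [← htq, ← zpow_natCast, ← zpow_mul, hr]
      push_cast
      ring_nf
    rw [map_mul, map_zpow, mul_pow, ← hs, ← zpow_natCast (_ ^ _), ← zpow_mul, neg_mul, zpow_neg,
      htrs]
    group
  refine ⟨k * t ^ (-(r * s : ℤ)), by rw [zpowers_sup_zpowers_mul_zpow, sup_comm, hsup], ?_⟩
  have hd : 0 < d := orderOf_pos _
  have he₀ : 0 < e := Nat.pos_of_mul_pos_left (he ▸ hd)
  have hq : 0 < q := Nat.pos_of_ne_zero index_ne_zero_of_finite
  calc orderOf (of t) * orderOf (of (k * t ^ (-(r * s : ℤ)))) ≤ q * e * g :=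
        Nat.mul_le_mul (Nat.le_of_dvd (Nat.mul_pos hq he₀) ht)
          (Nat.le_of_dvd (Nat.gcd_pos_of_pos_right j hd) hb)
    _ = d * q := by rw [he]; ring

theorem IsPGroup.exists_independent_generating_pair {p : ℕ} [Fact p.Prime] [Finite G]
    (hpG : IsPGroup p G) (hk : (zpowers k).Normal) (hsup : zpowers k ⊔ zpowers t = ⊤) :
    ∃ a b : G, zpowers a ⊔ zpowers b = ⊤ ∧ commutator G ≤ zpowers a ∧
      orderOf (of a) * orderOf (of b) ≤ Nat.card (Abelianization G) := by
  have hk' := Normal.commutator_le_of_self_sup_commutative_eq_top hsup inferInstance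
  rw [card_abelianization_eq_orderOf_mul_index hk']
  set q := (zpowers k).index
  set d := orderOf (of k)
  obtain ⟨j, hj⟩ : ∃ j : ℕ, k ^ j = t ^ q := mem_powers_iff_mem_zpowers.mpr (pow_index_mem _ t)
  obtain ⟨N, hN⟩ := hpG.exists_card_eq
  have hq : q ∣ p ^ N := hN ▸ index_dvd_card _
  have hd : d ∣ p ^ N := hN ▸ (orderOf_map_dvd _ k).trans (orderOf_dvd_natCard k)
  by_cases h : q.gcd d ∣ j
  · obtain ⟨b, hb, hbq⟩ := exists_zpowers_sup_eq_top_and_orderOf_dvd_index hsup hj h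
    exact ⟨k, b, hb, hk', Nat.mul_le_mul_left d
      (Nat.le_of_dvd (Nat.pos_of_ne_zero index_ne_zero_of_finite) hbq)⟩
  have hdj : ¬ d ∣ j := fun hdj ↦ h ((Nat.gcd_dvd_right q d).trans hdj)
  have hgq : j.gcd d ∣ q :=
    (Nat.dvd_or_dvd_of_dvd_prime_pow Fact.out ((Nat.gcd_dvd_right j d).trans hd) hq).resolve_right
      fun hqg ↦ h ((Nat.gcd_dvd_left q d).trans (hqg.trans (Nat.gcd_dvd_left j d)))
  have hgd : j.gcd (orderOf k) ∣ d :=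
    (Nat.dvd_or_dvd_of_dvd_prime_pow Fact.out
      ((Nat.gcd_dvd_right _ _).trans (hN ▸ orderOf_dvd_natCard k)) hd).resolve_right
      fun hdg ↦ hdj (hdg.trans (Nat.gcd_dvd_left _ _))
  have ht : commutator G ≤ zpowers t :=
    (commutator_le_zpowers_pow_orderOf_of hk').trans <| zpowers_le.mpr <|
      zpowers_le.mpr (hj ▸ pow_mem (mem_zpowers t) q) (pow_mem_zpowers_pow_of_gcd_dvd hgd)
  obtain ⟨b, hb, hcard⟩ := exists_zpowers_sup_eq_top_and_orderOf_mul_orderOf_le hsup hj hgq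
  exact ⟨t, b, hb, ht, hcard⟩

end Abelianization

end

/-- Let `p` be a prime and `G` a finite metacyclic `p`-group. Then
there are generators `a, b` of `G` with `⟨a⟩` normal such that `⟨a⟩` and `⟨b⟩` are
regular (`[F, N_G(F)] = F ∩ G'`) and the images `A`, `B` of `⟨a⟩`, `⟨b⟩` in the
abelianization satisfy `A ∩ B = 1` and `A·B = G/G'`; i.e. the family formed by `⟨a⟩` and
the conjugates of `⟨b⟩` is a generating, regular and independent family of cyclic
subgroups. -/
theorem metacyclic_p_group_regular_independent_family {G : Type*} [Group G] [Fintype G]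
    (p : ℕ) (hp : p.Prime) (hpG : IsPGroup p G)
    (K : Subgroup G) (hKn : K.Normal) (hKc : IsCyclic K) (hQc : IsCyclic (G ⧸ K)) :
    ∃ a b : G, Subgroup.closure ({a, b} : Set G) = ⊤ ∧
      (Subgroup.zpowers a).Normal ∧
      ⁅Subgroup.zpowers a, Subgroup.normalizer (Subgroup.zpowers a : Set G)⁆ =
        Subgroup.zpowers a ⊓ commutator G ∧
      ⁅Subgroup.zpowers b, Subgroup.normalizer (Subgroup.zpowers b : Set G)⁆ =
        Subgroup.zpowers b ⊓ commutator G ∧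
      (Subgroup.zpowers a).map (QuotientGroup.mk' (commutator G)) ⊓
          (Subgroup.zpowers b).map (QuotientGroup.mk' (commutator G)) = ⊥ ∧
      (Subgroup.zpowers a).map (QuotientGroup.mk' (commutator G)) ⊔
          (Subgroup.zpowers b).map (QuotientGroup.mk' (commutator G)) = ⊤ := by
  have : Fact p.Prime := ⟨hp⟩
  obtain ⟨k, rfl⟩ := (K.isCyclic_iff_exists_zpowers_eq_top).mp hKc
  obtain ⟨t, hkt⟩ := exists_sup_zpowers_eq_top_of_isCyclic_quotient (zpowers k)
  obtain ⟨a, b, hsup, hG', hcard⟩ := hpG.exists_independent_generating_pair hKn hkt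
  have hn : (zpowers a).Normal := Normal.of_commutator_le G hG'
  have hπ := QuotientGroup.mk'_surjective (commutator G)
  exact ⟨a, b, closure_pair_eq_top hsup, hn,
    commutator_normalizer_eq_inf_commutator_of_normal hsup,
    commutator_zpowers_normalizer_eq_inf_commutator hsup,
    map_zpowers_inf_map_zpowers_eq_bot hπ hn hsup hcard,
    by rw [← Subgroup.map_sup, hsup, map_top_of_surjective _ hπ]⟩
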